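/- arXiv:math/0204300 — 2 statements merged into one kernel-verified Lean document; each statement's English description precedes it below -/
import Mathlib

section
/- Let L : Λ → ℂ be a hermitian linear functional and let (f_n)_{n≥0} be a sequence in Λ. Define polynomials p_{2n}(z) := z^n f_{2n*}(z) (where f_{2n*} is the substar conjugate of f_{2n}) and p_{2n+1}(z) := z^n f_{2n+1}(z) for n ≥ 0. Then (f_n)_{n≥0} is a sequence of right orthogonal Laurent polynomials with respect to L if and only if (p_n)_{n≥0} is a sequence of orthogonal polynomials with respect to L; moreover (f_n)_{n≥0} is orthonormal if and only if (p_n)_{n≥0} is orthonormal. -/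
open LaurentPolynomial Polynomial Complex ComplexConjugate

noncomputable section

/-- Substar conjugate of a Laurent polynomial: f_*(z) = Σ conj(c_k) z^{-k}. -/
def substar (f : LaurentPolynomial ℂ) : LaurentPolynomial ℂ :=
  AddMonoidAlgebra.ofCoeff
    (Finsupp.mapRange (starRingEnd ℂ) (map_zero _) (LaurentPolynomial.invert f).coeff)

/-- Hermitian linear functional on Laurent polynomials. -/
def IsHermitianL (L : LaurentPolynomial ℂ →ₗ[ℂ] ℂ) : Prop :=
  ∀ n : ℕ, L (T (-(n : ℤ))) = conj (L (T (n : ℤ)))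

/-- The sesquilinear form induced by `L`: (f,g)_L := L (f g_*). -/
def sesq (L : LaurentPolynomial ℂ →ₗ[ℂ] ℂ) (f g : LaurentPolynomial ℂ) : ℂ :=
  L (f * substar g)

/-- Λ_{m,n} = span {z^m, …, z^n}. -/
def lamBox (m n : ℤ) : Submodule ℂ (LaurentPolynomial ℂ) :=
  Submodule.span ℂ ((fun k : ℤ => (T k : LaurentPolynomial ℂ)) '' Set.Icc m n)

/-- Λ_n^+  (Λ_{2n}^+ = Λ_{-n,n}, Λ_{2n+1}^+ = Λ_{-n,n+1}). -/
def lamPlus (n : ℕ) : Submodule ℂ (LaurentPolynomial ℂ) :=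
  lamBox (-((n / 2 : ℕ) : ℤ)) (((n + 1) / 2 : ℕ) : ℤ)

/-- Λ_n^-  (Λ_{2n}^- = Λ_{-n,n}, Λ_{2n+1}^- = Λ_{-n-1,n}). -/
def lamMinus (n : ℕ) : Submodule ℂ (LaurentPolynomial ℂ) :=
  lamBox (-(((n + 1) / 2 : ℕ) : ℤ)) ((n / 2 : ℕ) : ℤ)

/-- (f_n) is a sequence of right orthogonal Laurent polynomials w.r.t. L. -/
def IsRightOLP (L : LaurentPolynomial ℂ →ₗ[ℂ] ℂ) (f : ℕ → LaurentPolynomial ℂ) : Prop :=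
  (∀ n, f n ∈ lamPlus n) ∧ f 0 ≠ 0 ∧ (∀ n, f (n + 1) ∉ lamPlus n) ∧
    (∀ n m, n ≠ m → sesq L (f n) (f m) = 0) ∧ (∀ n, sesq L (f n) (f n) ≠ 0)

/-- (f_n) is a sequence of left orthogonal Laurent polynomials w.r.t. L. -/
def IsLeftOLP (L : LaurentPolynomial ℂ →ₗ[ℂ] ℂ) (f : ℕ → LaurentPolynomial ℂ) : Prop :=
  (∀ n, f n ∈ lamMinus n) ∧ f 0 ≠ 0 ∧ (∀ n, f (n + 1) ∉ lamMinus n) ∧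
    (∀ n m, n ≠ m → sesq L (f n) (f m) = 0) ∧ (∀ n, sesq L (f n) (f n) ≠ 0)

/-- Right orthonormal Laurent polynomials. -/
def IsRightOnLP (L : LaurentPolynomial ℂ →ₗ[ℂ] ℂ) (f : ℕ → LaurentPolynomial ℂ) : Prop :=
  IsRightOLP L f ∧ ∀ n, sesq L (f n) (f n) = 1 ∨ sesq L (f n) (f n) = -1

/-- Left orthonormal Laurent polynomials. -/
def IsLeftOnLP (L : LaurentPolynomial ℂ →ₗ[ℂ] ℂ) (f : ℕ → LaurentPolynomial ℂ) : Prop :=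
  IsLeftOLP L f ∧ ∀ n, sesq L (f n) (f n) = 1 ∨ sesq L (f n) (f n) = -1

/-- (p_n) is a sequence of orthogonal polynomials w.r.t. L: p_n has exact degree n
(i.e. p_n ∈ span{1,…,z^n} \ span{1,…,z^{n-1}}, viewed inside Λ) and
(p_n, p_m)_L = ℓ_n δ_{n,m} with ℓ_n ≠ 0. -/
def IsOPS (L : LaurentPolynomial ℂ →ₗ[ℂ] ℂ) (p : ℕ → LaurentPolynomial ℂ) : Prop :=
  (∀ n : ℕ, p n ∈ lamBox 0 (n : ℤ)) ∧ p 0 ≠ 0 ∧ (∀ n : ℕ, p (n + 1) ∉ lamBox 0 (n : ℤ)) ∧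
    (∀ n m, n ≠ m → sesq L (p n) (p m) = 0) ∧ (∀ n, sesq L (p n) (p n) ≠ 0)

/-- Orthonormal polynomial sequence. -/
def IsOnPS (L : LaurentPolynomial ℂ →ₗ[ℂ] ℂ) (p : ℕ → LaurentPolynomial ℂ) : Prop :=
  IsOPS L p ∧ ∀ n, sesq L (p n) (p n) = 1 ∨ sesq L (p n) (p n) = -1

/-! The map `rightToPoly n`, which is `x ↦ z ^ (n / 2) * x_*` for even `n` and `x ↦ z ^ (n / 2) * x`
for odd `n`, is a bijection of `Λ` carrying `Λ_n^+` onto `Λ_{0,n}` and `Λ_{n-1}^+` onto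
`Λ_{0,n-1}`, and it preserves `(·,·)_L` up to complex conjugation. Orthogonality cannot be
transported termwise, since `p_n` and `p_m` come from different maps. But for a sequence adapted to
a complete flag `V`, pairwise orthogonality amounts to `f_{n+1} ⊥ V n` for every `n`, and this
condition involves the single map `rightToPoly (n + 1)`. -/

section Flag

variable {K M R : Type*} [Field K] [AddCommGroup M] [Module K M] [CommSemiring R]
  {I₁ I₂ : K →+* R} {V W : ℕ → Submodule K M} {f : ℕ → M}

theorem span_image_Iic_eq_of_flag (hV : Monotone V)
    (hdim : ∀ n, Module.finrank K (V n) = n + 1) (hmem : ∀ n, f n ∈ V n) (h0 : f 0 ≠ 0)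
    (hnot : ∀ n, f (n + 1) ∉ V n) (n : ℕ) :
    Submodule.span K (f '' Set.Iic n) = V n := by
  have hle : ∀ n, Submodule.span K (f '' Set.Iic n) ≤ V n := fun n =>
    Submodule.span_le.mpr <| Set.image_subset_iff.mpr fun m hm => hV hm (hmem m)
  have hrank : ∀ n, n + 1 ≤ Module.finrank K (Submodule.span K (f '' Set.Iic n)) := by
    intro n
    induction n with
    | zero => rw [show Set.Iic 0 = {0} from Set.Iic_bot, Set.image_singleton,
        finrank_span_singleton h0]
    | succ n ih =>
      have hlt : Submodule.span K (f '' Set.Iic n) < Submodule.span K (f '' Set.Iic (n + 1)) := by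
        refine SetLike.lt_iff_le_and_exists.mpr ⟨Submodule.span_mono ?_, f (n + 1), ?_, ?_⟩
        · exact Set.image_mono (Set.Iic_subset_Iic.mpr n.le_succ)
        · exact Submodule.subset_span ⟨n + 1, Set.mem_Iic.mpr le_rfl, rfl⟩
        · exact fun h => hnot n (hle n h)
      have := FiniteDimensional.span_of_finite K ((Set.finite_Iic (n + 1)).image f)
      have := Submodule.finrank_lt_finrank_of_lt hlt
      omega
  have := Module.finite_of_finrank_eq_succ (hdim n)
  exact Submodule.eq_of_le_of_finrank_le (hle n) (hdim n ▸ hrank n)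

theorem forall_ne_eq_zero_iff_of_flag {B : M →ₛₗ[I₁] M →ₛₗ[I₂] R} (hB : B.IsRefl)
    (hV : Monotone V) (hdim : ∀ n, Module.finrank K (V n) = n + 1) (hmem : ∀ n, f n ∈ V n)
    (h0 : f 0 ≠ 0) (hnot : ∀ n, f (n + 1) ∉ V n) :
    (∀ n m, n ≠ m → B (f n) (f m) = 0) ↔ ∀ n, ∀ g ∈ V n, B (f (n + 1)) g = 0 := by
  constructor
  · intro h n g hg
    rw [← span_image_Iic_eq_of_flag hV hdim hmem h0 hnot] at hg
    refine (Submodule.span_le (p := LinearMap.ker (B (f (n + 1)))).mpr ?_ hg)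
    rintro - ⟨m, hm, rfl⟩
    exact h _ _ (by simp only [Set.mem_Iic] at hm; omega)
  · intro h
    have hlt : ∀ n m, m < n → B (f n) (f m) = 0 := by
      intro n m hmn
      obtain ⟨k, rfl⟩ := Nat.exists_eq_add_of_lt hmn
      exact h (m + k) (f m) (hV (by omega) (hmem m))
    intro n m hnm
    rcases hnm.lt_or_gt with hnm | hnm
    · exact hB _ _ (hlt m n hnm)
    · exact hlt n m hnm

def IsOrthogonalSeq (B : M →ₛₗ[I₁] M →ₛₗ[I₂] R) (V : ℕ → Submodule K M) (f : ℕ → M) : Prop :=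
  (∀ n, f n ∈ V n) ∧ f 0 ≠ 0 ∧ (∀ n, f (n + 1) ∉ V n) ∧
    (∀ n m, n ≠ m → B (f n) (f m) = 0) ∧ ∀ n, B (f n) (f n) ≠ 0

theorem isOrthogonalSeq_map_iff {B : M →ₛₗ[I₁] M →ₛₗ[I₂] R} (hB : B.IsRefl)
    (hV : Monotone V) (hVdim : ∀ n, Module.finrank K (V n) = n + 1)
    (hW : Monotone W) (hWdim : ∀ n, Module.finrank K (W n) = n + 1) (τ : ℕ → M ≃+ M)
    (hτ : ∀ n x, τ n x ∈ W n ↔ x ∈ V n) (hτ_succ : ∀ n x, τ (n + 1) x ∈ W n ↔ x ∈ V n)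
    (hτB : ∀ n x y, B (τ n x) (τ n y) = 0 ↔ B x y = 0) (f : ℕ → M) :
    IsOrthogonalSeq B W (fun n => τ n (f n)) ↔ IsOrthogonalSeq B V f := by
  unfold IsOrthogonalSeq
  simp only [hτ, hτ_succ, hτB, ne_eq, map_eq_zero_iff _ (τ 0).injective]
  refine and_congr_right fun hmem => and_congr_right fun h0 => and_congr_right fun hnot =>
    and_congr_left fun _ => ?_
  have hmemτ : ∀ n, τ n (f n) ∈ W n := fun n => (hτ n _).mpr (hmem n)
  have hnotτ : ∀ n, τ (n + 1) (f (n + 1)) ∉ W n := fun n => (hτ_succ n _).not.mpr (hnot n)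
  rw [forall_ne_eq_zero_iff_of_flag hB hW hWdim hmemτ ((map_ne_zero_iff _ (τ 0).injective).mpr h0)
    hnotτ, forall_ne_eq_zero_iff_of_flag hB hV hVdim hmem h0 hnot]
  refine forall_congr' fun n => (τ (n + 1)).surjective.forall.trans ?_
  simp only [hτ_succ, hτB]

end Flag

lemma coeff_substar (f : LaurentPolynomial ℂ) (n : ℤ) :
    (substar f).coeff n = conj (f.coeff (-n)) := by
  simp [substar]

def substarRingHom : LaurentPolynomial ℂ →+* LaurentPolynomial ℂ :=
  (AddMonoidAlgebra.mapRingHom ℤ (starRingEnd ℂ)).comp invert.toRingHom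

lemma substarRingHom_apply (f : LaurentPolynomial ℂ) : substarRingHom f = substar f := by
  ext n
  simp [substarRingHom, coeff_substar]

lemma substar_add (f g : LaurentPolynomial ℂ) : substar (f + g) = substar f + substar g := by
  simp only [← substarRingHom_apply, map_add]

lemma substar_mul (f g : LaurentPolynomial ℂ) : substar (f * g) = substar f * substar g := by
  simp only [← substarRingHom_apply, map_mul]

lemma substar_smul (c : ℂ) (f : LaurentPolynomial ℂ) : substar (c • f) = conj c • substar f := by
  ext n
  simp [coeff_substar]

lemma substar_T (k : ℤ) : substar (T k) = T (-k) := by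
  ext n
  simp only [coeff_substar, T, AddMonoidAlgebra.coeff_single, Finsupp.single_apply, neg_eq_iff_eq_neg]
  split_ifs <;> simp

@[simp]
lemma substar_substar (f : LaurentPolynomial ℂ) : substar (substar f) = f := by
  ext n
  simp [coeff_substar]

def substarAddEquiv : LaurentPolynomial ℂ ≃+ LaurentPolynomial ℂ where
  toFun := substar
  invFun := substar
  left_inv := substar_substar
  right_inv := substar_substar
  map_add' := substar_add

def mulTAddEquiv (k : ℤ) : LaurentPolynomial ℂ ≃+ LaurentPolynomial ℂ where
  toFun f := T k * f
  invFun f := T (-k) * f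
  left_inv f := by simp [← mul_assoc]
  right_inv f := by simp [← mul_assoc]
  map_add' := mul_add _

namespace IsHermitianL

variable {L : LaurentPolynomial ℂ →ₗ[ℂ] ℂ} (hL : IsHermitianL L)
include hL

lemma map_T_neg (k : ℤ) : L (T (-k)) = conj (L (T k)) := by
  obtain ⟨n, rfl | rfl⟩ := Int.eq_nat_or_neg k
  · exact hL n
  · rw [neg_neg, hL n, Complex.conj_conj]

lemma map_substar (f : LaurentPolynomial ℂ) : L (substar f) = conj (L f) := by
  induction f using LaurentPolynomial.induction_on' with
  | add f g hf hg => rw [substar_add, map_add, map_add, hf, hg, map_add]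
  | C_mul_T k c =>
    rw [← LaurentPolynomial.smul_eq_C_mul, substar_smul, substar_T, map_smul, map_smul, map_T_neg hL, smul_eq_mul,
      smul_eq_mul, map_mul]

lemma conj_sesq (f g : LaurentPolynomial ℂ) : conj (sesq L f g) = sesq L g f := by
  rw [sesq, sesq, ← map_substar hL, substar_mul, substar_substar, mul_comm]

lemma sesq_substar_substar (f g : LaurentPolynomial ℂ) :
    sesq L (substar f) (substar g) = conj (sesq L f g) := by
  rw [conj_sesq hL, sesq, sesq, substar_substar, mul_comm]

end IsHermitianL

lemma sesq_T_mul_T_mul (L : LaurentPolynomial ℂ →ₗ[ℂ] ℂ) (k : ℤ) (f g : LaurentPolynomial ℂ) :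
    sesq L (T k * f) (T k * g) = sesq L f g := by
  rw [sesq, sesq, substar_mul, substar_T, mul_mul_mul_comm, ← T_add, add_neg_cancel, T_zero, one_mul]

def sesqForm (L : LaurentPolynomial ℂ →ₗ[ℂ] ℂ) :
    LaurentPolynomial ℂ →ₗ[ℂ] LaurentPolynomial ℂ →ₗ⋆[ℂ] ℂ :=
  LinearMap.mk₂'ₛₗ (RingHom.id ℂ) (starRingEnd ℂ) (sesq L)
    (fun f f' g => by rw [sesq, sesq, sesq, add_mul, map_add])
    (fun c f g => by rw [sesq, sesq, smul_mul_assoc, map_smul, RingHom.id_apply])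
    (fun f g g' => by rw [sesq, sesq, sesq, substar_add, mul_add, map_add])
    (fun c f g => by rw [sesq, sesq, substar_smul, mul_smul_comm, map_smul])

lemma IsHermitianL.sesqForm_isRefl {L : LaurentPolynomial ℂ →ₗ[ℂ] ℂ} (hL : IsHermitianL L) :
    (sesqForm L).IsRefl := fun f g h => by
  change sesq L g f = 0
  rw [← hL.conj_sesq, show sesq L f g = 0 from h, map_zero]

lemma T_mem_lamBox {a b k : ℤ} (h : k ∈ Set.Icc a b) : (T k : LaurentPolynomial ℂ) ∈ lamBox a b :=
  Submodule.subset_span ⟨k, h, rfl⟩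

lemma lamBox_mono {a b a' b' : ℤ} (ha : a' ≤ a) (hb : b ≤ b') : lamBox a b ≤ lamBox a' b' :=
  Submodule.span_mono (Set.image_mono (Set.Icc_subset_Icc ha hb))

lemma finrank_lamBox (a b : ℤ) : Module.finrank ℂ (lamBox a b) = (b + 1 - a).toNat := by
  have hT : LinearIndependent ℂ (fun k : ℤ => (T k : LaurentPolynomial ℂ)) :=
    (Finsupp.basisSingleOne.map (AddMonoidAlgebra.coeffLinearEquiv ℂ).symm).linearIndependent
  rw [lamBox, Set.image_eq_range,
    finrank_span_eq_card (b := fun k : Set.Icc a b => T (k : ℤ)) (hT.comp _ Subtype.val_injective)]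
  simp

lemma T_mul_mem_lamBox {a b k : ℤ} {f : LaurentPolynomial ℂ} (h : f ∈ lamBox a b) :
    T k * f ∈ lamBox (a + k) (b + k) := by
  induction h using Submodule.span_induction with
  | mem g hg =>
    obtain ⟨j, ⟨hj₁, hj₂⟩, rfl⟩ := hg
    rw [← T_add]
    exact T_mem_lamBox ⟨by omega, by omega⟩
  | zero => simp
  | add g g' _ _ hg hg' => rw [mul_add]; exact add_mem hg hg'
  | smul c g _ hg => rw [mul_smul_comm]; exact Submodule.smul_mem _ _ hg

lemma T_mul_mem_lamBox_iff {a b k : ℤ} {f : LaurentPolynomial ℂ} :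
    T k * f ∈ lamBox a b ↔ f ∈ lamBox (a - k) (b - k) := by
  refine ⟨fun h => ?_, fun h => by simpa using T_mul_mem_lamBox (k := k) h⟩
  simpa [← mul_assoc, ← T_add, sub_eq_add_neg] using T_mul_mem_lamBox (k := -k) h

lemma substar_mem_lamBox {a b : ℤ} {f : LaurentPolynomial ℂ} (h : f ∈ lamBox a b) :
    substar f ∈ lamBox (-b) (-a) := by
  induction h using Submodule.span_induction with
  | mem g hg =>
    obtain ⟨j, ⟨hj₁, hj₂⟩, rfl⟩ := hg
    rw [substar_T]
    exact T_mem_lamBox ⟨by omega, by omega⟩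
  | zero => simp [← substarRingHom_apply]
  | add g g' _ _ hg hg' => rw [substar_add]; exact add_mem hg hg'
  | smul c g _ hg => rw [substar_smul]; exact Submodule.smul_mem _ _ hg

lemma substar_mem_lamBox_iff {a b : ℤ} {f : LaurentPolynomial ℂ} :
    substar f ∈ lamBox a b ↔ f ∈ lamBox (-b) (-a) :=
  ⟨fun h => by simpa using substar_mem_lamBox h, fun h => by simpa using substar_mem_lamBox h⟩

lemma lamPlus_two_mul (a : ℕ) : lamPlus (2 * a) = lamBox (-a) a := by
  rw [lamPlus, show 2 * a / 2 = a by omega, show (2 * a + 1) / 2 = a by omega]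

lemma lamPlus_two_mul_add_one (a : ℕ) : lamPlus (2 * a + 1) = lamBox (-a) (a + 1) := by
  rw [lamPlus, show (2 * a + 1) / 2 = a by omega, show (2 * a + 1 + 1) / 2 = a + 1 by omega]
  push_cast
  rfl

lemma lamPlus_mono : Monotone lamPlus :=
  monotone_nat_of_le_succ fun n => lamBox_mono (by omega) (by omega)

lemma finrank_lamPlus (n : ℕ) : Module.finrank ℂ (lamPlus n) = n + 1 := by
  rw [lamPlus, finrank_lamBox]
  omega

lemma lamBox_zero_mono : Monotone fun n : ℕ => lamBox 0 n :=
  monotone_nat_of_le_succ fun n => lamBox_mono le_rfl (by omega)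

lemma finrank_lamBox_zero (n : ℕ) : Module.finrank ℂ (lamBox 0 n) = n + 1 := by
  rw [finrank_lamBox]
  omega

def rightToPoly (n : ℕ) : LaurentPolynomial ℂ ≃+ LaurentPolynomial ℂ :=
  if Even n then substarAddEquiv.trans (mulTAddEquiv (n / 2 : ℕ)) else mulTAddEquiv (n / 2 : ℕ)

lemma rightToPoly_two_mul (a : ℕ) (f : LaurentPolynomial ℂ) :
    rightToPoly (2 * a) f = T a * substar f := by
  simp [rightToPoly, substarAddEquiv, mulTAddEquiv]

lemma rightToPoly_two_mul_add_one (a : ℕ) (f : LaurentPolynomial ℂ) :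
    rightToPoly (2 * a + 1) f = T a * f := by
  simp [rightToPoly, mulTAddEquiv, show (2 * a + 1) / 2 = a by omega]

lemma rightToPoly_mem_lamBox_iff (n : ℕ) (f : LaurentPolynomial ℂ) :
    rightToPoly n f ∈ lamBox 0 n ↔ f ∈ lamPlus n := by
  obtain ⟨a, rfl | rfl⟩ := Nat.even_or_odd' n
  · rw [rightToPoly_two_mul, T_mul_mem_lamBox_iff, substar_mem_lamBox_iff, lamPlus_two_mul]
    congr! 2 <;> push_cast <;> ring
  · rw [rightToPoly_two_mul_add_one, T_mul_mem_lamBox_iff, lamPlus_two_mul_add_one]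
    congr! 2 <;> push_cast <;> ring

lemma rightToPoly_succ_mem_lamBox_iff (n : ℕ) (f : LaurentPolynomial ℂ) :
    rightToPoly (n + 1) f ∈ lamBox 0 n ↔ f ∈ lamPlus n := by
  obtain ⟨a, rfl | rfl⟩ := Nat.even_or_odd' n
  · rw [rightToPoly_two_mul_add_one, T_mul_mem_lamBox_iff, lamPlus_two_mul]
    congr! 2 <;> push_cast <;> ring
  · rw [show 2 * a + 1 + 1 = 2 * (a + 1) by ring, rightToPoly_two_mul, T_mul_mem_lamBox_iff,
      substar_mem_lamBox_iff, lamPlus_two_mul_add_one]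
    congr! 2; push_cast; ring

namespace IsHermitianL

variable {L : LaurentPolynomial ℂ →ₗ[ℂ] ℂ} (hL : IsHermitianL L)
include hL

lemma sesq_rightToPoly_eq_zero_iff (n : ℕ) (f g : LaurentPolynomial ℂ) :
    sesq L (rightToPoly n f) (rightToPoly n g) = 0 ↔ sesq L f g = 0 := by
  obtain ⟨a, rfl | rfl⟩ := Nat.even_or_odd' n
  · rw [rightToPoly_two_mul, rightToPoly_two_mul, sesq_T_mul_T_mul, hL.sesq_substar_substar,
      map_eq_zero]
  · rw [rightToPoly_two_mul_add_one, rightToPoly_two_mul_add_one, sesq_T_mul_T_mul]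

lemma sesq_rightToPoly_self (n : ℕ) (f : LaurentPolynomial ℂ) :
    sesq L (rightToPoly n f) (rightToPoly n f) = sesq L f f := by
  obtain ⟨a, rfl | rfl⟩ := Nat.even_or_odd' n
  · rw [rightToPoly_two_mul, sesq_T_mul_T_mul, hL.sesq_substar_substar, hL.conj_sesq]
  · rw [rightToPoly_two_mul_add_one, sesq_T_mul_T_mul]

end IsHermitianL

/-- Proposition 2.2: with p_{2n}(z) := z^n f_{2n*}(z) and
p_{2n+1}(z) := z^n f_{2n+1}(z), the sequence (f_n) is a sequence of right orthogonal
Laurent polynomials w.r.t. L iff (p_n) is a sequence of orthogonal polynomials w.r.t. L;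
and (f_n) is orthonormal iff (p_n) is orthonormal. -/
theorem rightOLP_iff_OPS
    (L : LaurentPolynomial ℂ →ₗ[ℂ] ℂ) (hL : IsHermitianL L)
    (f p : ℕ → LaurentPolynomial ℂ)
    (hp : ∀ n : ℕ, p (2 * n) = T (n : ℤ) * substar (f (2 * n)) ∧
      p (2 * n + 1) = T (n : ℤ) * f (2 * n + 1)) :
    (IsRightOLP L f ↔ IsOPS L p) ∧ (IsRightOnLP L f ↔ IsOnPS L p) := by
  obtain rfl : p = fun n => rightToPoly n (f n) := funext fun n => by
    obtain ⟨a, rfl | rfl⟩ := Nat.even_or_odd' n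
    · rw [(hp a).1, rightToPoly_two_mul]
    · rw [(hp a).2, rightToPoly_two_mul_add_one]
  -- `IsRightOLP L` and `IsOPS L` unfold to `IsOrthogonalSeq (sesqForm L)` for the two flags.
  have hOLP : IsRightOLP L f ↔ IsOPS L fun n => rightToPoly n (f n) :=
    (isOrthogonalSeq_map_iff hL.sesqForm_isRefl lamPlus_mono finrank_lamPlus lamBox_zero_mono
      finrank_lamBox_zero rightToPoly rightToPoly_mem_lamBox_iff rightToPoly_succ_mem_lamBox_iff
      hL.sesq_rightToPoly_eq_zero_iff f).symm
  refine ⟨hOLP, and_congr hOLP (forall_congr' fun n => ?_)⟩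
  rw [hL.sesq_rightToPoly_self]
end
end

section
/- The standard right orthonormal Laurent polynomials χ_n satisfy, as identities in ℂ[z, z^{−1}]: z·χ_0 = −a_1·χ_0 + ρ_1·χ_1, and for every n ≥ 1: z·χ_{2n−1} = −ρ̂_{2n−1} a_{2n}·χ_{2n−2} − conj(a_{2n−1}) a_{2n}·χ_{2n−1} − ρ_{2n} a_{2n+1}·χ_{2n} + ρ_{2n} ρ_{2n+1}·χ_{2n+1} and z·χ_{2n} = ρ̂_{2n−1} ρ̂_{2n}·χ_{2n−2} + conj(a_{2n−1}) ρ̂_{2n}·χ_{2n−1} − conj(a_{2n}) a_{2n+1}·χ_{2n} + conj(a_{2n}) ρ_{2n+1}·χ_{2n+1}. -/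
open LaurentPolynomial Polynomial Complex ComplexConjugate

noncomputable section

/-- Reversed polynomial with conjugated coefficients: p*(z) = Σ conj(c_{m-k}) z^k. -/
def revc (p : Polynomial ℂ) : Polynomial ℂ := (p.map (starRingEnd ℂ)).reverse

/-- Monic orthogonal polynomials from Schur parameters: φ_0 = 1,
φ_n = z φ_{n-1} + a_n φ*_{n-1}. -/
def phi (a : ℕ → ℂ) : ℕ → Polynomial ℂ
  | 0 => 1
  | n + 1 => X * phi a n + Polynomial.C (a (n + 1)) * revc (phi a n)

/-- ρ_n := |1 - |a_n|²|^{1/2}. -/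
def rho (a : ℕ → ℂ) (n : ℕ) : ℝ := Real.sqrt |1 - ‖a n‖ ^ 2|

/-- ε_n := sgn (1 - |a_n|²). -/
def sgn (a : ℕ → ℂ) (n : ℕ) : ℝ := Real.sign (1 - ‖a n‖ ^ 2)

/-- ρ̂_n := ε_n ρ_n. -/
def rhoh (a : ℕ → ℂ) (n : ℕ) : ℝ := sgn a n * rho a n

/-- κ_n := Π_{k=1}^n ρ_k⁻¹ (κ_0 = 1). -/
def kap (a : ℕ → ℂ) (n : ℕ) : ℝ := ∏ k ∈ Finset.Icc 1 n, (rho a k)⁻¹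

/-- e_n := Π_{k=1}^n ε_k (e_0 = 1). -/
def esgn (a : ℕ → ℂ) (n : ℕ) : ℝ := ∏ k ∈ Finset.Icc 1 n, sgn a k

/-- Orthonormal polynomials φ̂_n := κ_n φ_n. -/
def phin (a : ℕ → ℂ) (n : ℕ) : Polynomial ℂ := Polynomial.C ((kap a n : ℝ) : ℂ) * phi a n

/-- Standard right orthonormal Laurent polynomials:
χ_{2m} = z^{-m} φ̂*_{2m}, χ_{2m+1} = z^{-m} φ̂_{2m+1}. -/
def chi (a : ℕ → ℂ) (n : ℕ) : LaurentPolynomial ℂ :=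
  T (-((n / 2 : ℕ) : ℤ)) * (if Even n then revc (phin a n) else phin a n).toLaurent

/-- The kernel K_n(z,y) := Σ_{k=0}^n e_k φ̂_k(z) conj(φ̂_k(y)). -/
def Kker (a : ℕ → ℂ) (n : ℕ) (z y : ℂ) : ℂ :=
  ∑ k ∈ Finset.range (n + 1),
    ((esgn a k : ℝ) : ℂ) * (phin a k).eval z * conj ((phin a k).eval y)

/-- Entries of the five-diagonal matrix, with rows/columns indexed from 1. -/
def Fent (a : ℕ → ℂ) (i j : ℕ) : ℂ :=
  if i = 1 then
    if j = 1 then -a 1 else if j = 2 then (rho a 1 : ℂ) else 0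
  else if i % 2 = 0 then
    if j + 1 = i then -(rhoh a (i - 1) : ℂ) * a i
    else if j = i then -conj (a (i - 1)) * a i
    else if j = i + 1 then -(rho a i : ℂ) * a (i + 1)
    else if j = i + 2 then (rho a i : ℂ) * (rho a (i + 1) : ℂ)
    else 0
  else
    if j + 2 = i then (rhoh a (i - 2) : ℂ) * (rhoh a (i - 1) : ℂ)
    else if j + 1 = i then conj (a (i - 2)) * (rhoh a (i - 1) : ℂ)
    else if j = i then -conj (a (i - 1)) * a i
    else if j = i + 1 then conj (a (i - 1)) * (rho a i : ℂ)
    else 0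

/-- The n×n five-diagonal matrix ℱ_n. -/
def Fmat (a : ℕ → ℂ) (n : ℕ) : Matrix (Fin n) (Fin n) ℂ :=
  Matrix.of fun i j => Fent a (i.val + 1) (j.val + 1)

/-- Evaluation of a Laurent polynomial at a nonzero complex number. -/
def levalAt (z : ℂ) (f : LaurentPolynomial ℂ) : ℂ :=
  Finsupp.sum f.coeff fun k c => c * z ^ k

/-!
Write `χ_{2m} = z^{-m} φ̂*_{2m}` and `χ_{2m+1} = z^{-m} φ̂_{2m+1}`. After multiplication by
`z^{m+1}` each five-term relation becomes a polynomial identity between `φ̂*_{2m}`, `φ̂_{2m+1}`,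
`φ̂*_{2m+2}` and `φ̂_{2m+3}`, which is a linear combination of the Szegő recursion
`ρ_{n+1} φ̂_{n+1} = z φ̂_n + a_{n+1} φ̂*_n` and of its reversed form
`φ̂*_{n+1} = ρ̂_{n+1} φ̂*_n + conj(a_{n+1}) φ̂_{n+1}`. The reversed form follows from
`ρ_{n+1} φ̂*_{n+1} = φ̂*_n + conj(a_{n+1}) z φ̂_n` and `ρ_{n+1} ρ̂_{n+1} + |a_{n+1}|² = 1`.
-/

section Reversal

lemma revc_eq_reflect {p : ℂ[X]} {n : ℕ} (h : p.natDegree = n) :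
    revc p = reflect n (p.map (starRingEnd ℂ)) := by
  rw [revc, reverse, natDegree_map, h]

lemma natDegree_revc_le (p : ℂ[X]) : (revc p).natDegree ≤ p.natDegree :=
  (reverse_natDegree_le _).trans (natDegree_map _).le

lemma map_conj_revc {p : ℂ[X]} {n : ℕ} (h : p.natDegree = n) :
    (revc p).map (starRingEnd ℂ) = reflect n p := by
  rw [revc_eq_reflect h, ← reflect_map, Polynomial.map_map, RingHomCompTriple.comp_eq,
    Polynomial.map_id]

lemma revc_one : revc 1 = 1 := by
  rw [revc, Polynomial.map_one, ← C_1, reverse_C]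

lemma revc_C_mul {c : ℂ} (hc : c ≠ 0) (p : ℂ[X]) :
    revc (Polynomial.C c * p) = Polynomial.C (conj c) * revc p := by
  rw [revc, revc, Polynomial.map_mul, Polynomial.map_C, reverse, reverse,
    natDegree_C_mul ((_root_.map_ne_zero _).mpr hc), reflect_C_mul]

lemma reflect_succ_X_mul {q : ℂ[X]} {n : ℕ} (hq : q.natDegree ≤ n) :
    reflect (n + 1) (X * q) = reflect n q := by
  rw [add_comm, reflect_mul _ _ natDegree_X_le hq, reflect_one_X, one_mul]

variable {p : ℂ[X]} (hp : p.Monic) (c : ℂ)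
include hp

lemma degree_C_mul_revc_lt : (Polynomial.C c * revc p).degree < (X * p).degree := by
  rw [degree_eq_natDegree (monic_X.mul hp).ne_zero, natDegree_mul X_ne_zero hp.ne_zero,
    natDegree_X]
  calc (Polynomial.C c * revc p).degree ≤ (Polynomial.C c * revc p).natDegree :=
        degree_le_natDegree
    _ ≤ p.natDegree := by exact_mod_cast (natDegree_C_mul_le _ _).trans (natDegree_revc_le p)
    _ < (1 + p.natDegree : ℕ) := by exact_mod_cast (by omega : p.natDegree < 1 + p.natDegree)

lemma monic_X_mul_add_C_mul_revc : (X * p + Polynomial.C c * revc p).Monic :=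
  (monic_X.mul hp).add_of_left (degree_C_mul_revc_lt hp c)

lemma natDegree_X_mul_add_C_mul_revc :
    (X * p + Polynomial.C c * revc p).natDegree = p.natDegree + 1 := by
  rw [natDegree_add_eq_left_of_degree_lt (degree_C_mul_revc_lt hp c),
    natDegree_mul X_ne_zero hp.ne_zero, natDegree_X, add_comm]

lemma revc_X_mul_add_C_mul_revc :
    revc (X * p + Polynomial.C c * revc p) = revc p + Polynomial.C (conj c) * (X * p) := by
  rw [revc_eq_reflect (natDegree_X_mul_add_C_mul_revc hp c), Polynomial.map_add,
    Polynomial.map_mul, Polynomial.map_mul, Polynomial.map_X, Polynomial.map_C, reflect_add,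
    reflect_C_mul, reflect_succ_X_mul (natDegree_map _).le, map_conj_revc rfl,
    ← reflect_succ_X_mul le_rfl, revc_eq_reflect rfl, reflect_reflect]

end Reversal

lemma T_one_mul_T_mul_toLaurent {R : Type*} [CommSemiring R] (k : ℤ) (p : R[X]) :
    T 1 * (T k * toLaurent p) = T k * toLaurent (X * p) := by
  rw [map_mul, Polynomial.toLaurent_X, mul_left_comm]

lemma smul_T_mul_toLaurent {R : Type*} [CommSemiring R] (c : R) (k : ℤ) (p : R[X]) :
    c • (T k * toLaurent p) = T k * toLaurent (Polynomial.C c * p) := by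
  rw [map_mul, Polynomial.toLaurent_C, mul_left_comm, LaurentPolynomial.smul_eq_C_mul]

lemma real_sign_mul_abs (x : ℝ) : Real.sign x * |x| = x := by
  rcases lt_trichotomy x 0 with h | rfl | h
  · rw [Real.sign_of_neg h, abs_of_neg h, neg_one_mul, neg_neg]
  · rw [abs_zero, mul_zero]
  · rw [Real.sign_of_pos h, abs_of_pos h, one_mul]

section Schur

variable (a : ℕ → ℂ)

lemma monic_phi (n : ℕ) : (phi a n).Monic := by
  induction n with
  | zero => exact monic_one
  | succ n ih => exact monic_X_mul_add_C_mul_revc ih _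

lemma revc_phi_succ (n : ℕ) :
    revc (phi a (n + 1)) = revc (phi a n) + Polynomial.C (conj (a (n + 1))) * (X * phi a n) :=
  revc_X_mul_add_C_mul_revc (monic_phi a n) _

lemma rho_mul_rhoh_add_norm_sq (n : ℕ) : rho a n * rhoh a n + ‖a n‖ ^ 2 = 1 := by
  rw [rhoh, mul_left_comm, ← sq, rho, Real.sq_sqrt (abs_nonneg _), sgn, real_sign_mul_abs]
  ring

lemma rho_ne_zero {n : ℕ} (h : ‖a n‖ ≠ 1) : rho a n ≠ 0 := by
  rw [rho, Real.sqrt_ne_zero', abs_pos, sub_ne_zero, ne_comm]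
  exact (pow_eq_one_iff_of_nonneg (norm_nonneg _) two_ne_zero).not.mpr h

lemma phin_zero : phin a 0 = 1 := by
  simp [phin, phi, kap]

lemma chi_eq_T_mul {j i k : ℕ} (h : j / 2 + i = k) :
    chi a j = T (-(k : ℤ)) *
      toLaurent (X ^ i * if Even j then revc (phin a j) else phin a j) := by
  rw [chi, map_mul, Polynomial.toLaurent_X_pow, ← mul_assoc, ← T_add, ← h]
  push_cast
  ring_nf

variable {a} (ha : ∀ n, 1 ≤ n → ‖a n‖ ≠ 1)
include ha

lemma kap_ne_zero (n : ℕ) : kap a n ≠ 0 :=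
  Finset.prod_ne_zero_iff.mpr fun k hk =>
    inv_ne_zero (rho_ne_zero a (ha k (Finset.mem_Icc.mp hk).1))

lemma rho_mul_kap_succ (n : ℕ) : rho a (n + 1) * kap a (n + 1) = kap a n := by
  rw [kap, kap, Finset.prod_Icc_succ_top (by omega), mul_comm, mul_assoc,
    inv_mul_cancel₀ (rho_ne_zero a (ha _ n.succ_pos)), mul_one]

lemma revc_phin (n : ℕ) : revc (phin a n) = Polynomial.C (kap a n : ℂ) * revc (phi a n) := by
  rw [phin, revc_C_mul (ofReal_ne_zero.mpr (kap_ne_zero ha n)), conj_ofReal]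

lemma rho_mul_phin_succ (n : ℕ) :
    Polynomial.C (rho a (n + 1) : ℂ) * phin a (n + 1) =
      X * phin a n + Polynomial.C (a (n + 1)) * revc (phin a n) := by
  rw [revc_phin ha, phin, phin, phi, ← mul_assoc, ← C_mul, ← ofReal_mul, rho_mul_kap_succ ha]
  ring

lemma rho_mul_revc_phin_succ (n : ℕ) :
    Polynomial.C (rho a (n + 1) : ℂ) * revc (phin a (n + 1)) =
      revc (phin a n) + Polynomial.C (conj (a (n + 1))) * (X * phin a n) := by
  rw [revc_phin ha, revc_phin ha, phin, revc_phi_succ, ← mul_assoc, ← C_mul, ← ofReal_mul,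
    rho_mul_kap_succ ha]
  ring

lemma revc_phin_succ (n : ℕ) :
    revc (phin a (n + 1)) =
      Polynomial.C (rhoh a (n + 1) : ℂ) * revc (phin a n) +
        Polynomial.C (conj (a (n + 1))) * phin a (n + 1) := by
  have hρ : Polynomial.C (rho a (n + 1) : ℂ) ≠ 0 :=
    C_ne_zero.mpr (ofReal_ne_zero.mpr (rho_ne_zero a (ha _ n.succ_pos)))
  have hunit : Polynomial.C (rho a (n + 1) : ℂ) * Polynomial.C (rhoh a (n + 1) : ℂ) +
      Polynomial.C (conj (a (n + 1))) * Polynomial.C (a (n + 1)) = 1 := by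
    rw [← C_mul, ← C_mul, ← C_add, ← C_1, conj_mul']
    exact congrArg _ (mod_cast rho_mul_rhoh_add_norm_sq a (n + 1))
  apply mul_left_cancel₀ hρ
  linear_combination rho_mul_revc_phin_succ ha n -
    Polynomial.C (conj (a (n + 1))) * rho_mul_phin_succ ha n - revc (phin a n) * hunit

lemma X_sq_mul_phin_succ (n : ℕ) :
    X ^ 2 * phin a (n + 1) =
      Polynomial.C (-(rhoh a (n + 1) : ℂ) * a (n + 2)) * (X * revc (phin a n)) +
      Polynomial.C (-conj (a (n + 1)) * a (n + 2)) * (X * phin a (n + 1)) +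
      Polynomial.C (-(rho a (n + 2) : ℂ) * a (n + 3)) * revc (phin a (n + 2)) +
      Polynomial.C ((rho a (n + 2) : ℂ) * (rho a (n + 3) : ℂ)) * phin a (n + 3) := by
  simp only [map_mul, map_neg]
  linear_combination -Polynomial.C (rho a (n + 2) : ℂ) * rho_mul_phin_succ ha (n + 2) -
    X * rho_mul_phin_succ ha (n + 1) - Polynomial.C (a (n + 2)) * X * revc_phin_succ ha n

lemma X_mul_revc_phin_add_two (n : ℕ) :
    X * revc (phin a (n + 2)) =
      Polynomial.C ((rhoh a (n + 1) : ℂ) * (rhoh a (n + 2) : ℂ)) * (X * revc (phin a n)) +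
      Polynomial.C (conj (a (n + 1)) * (rhoh a (n + 2) : ℂ)) * (X * phin a (n + 1)) +
      Polynomial.C (-conj (a (n + 2)) * a (n + 3)) * revc (phin a (n + 2)) +
      Polynomial.C (conj (a (n + 2)) * (rho a (n + 3) : ℂ)) * phin a (n + 3) := by
  simp only [map_mul, map_neg]
  linear_combination X * revc_phin_succ ha (n + 1) -
    Polynomial.C (conj (a (n + 2))) * rho_mul_phin_succ ha (n + 2) +
    Polynomial.C (rhoh a (n + 2) : ℂ) * X * revc_phin_succ ha n

lemma T_one_mul_chi_zero : T 1 * chi a 0 = (-a 1) • chi a 0 + (rho a 1 : ℂ) • chi a 1 := by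
  rw [chi_eq_T_mul a (j := 0) (i := 0) (k := 0) rfl, chi_eq_T_mul a (j := 1) (i := 0) (k := 0) rfl]
  simp only [T_one_mul_T_mul_toLaurent, smul_T_mul_toLaurent, ← mul_add, ← map_add]
  congr 2
  simp only [Even.zero, Nat.not_even_one, ↓reduceIte, pow_zero, one_mul, map_neg]
  have h := rho_mul_phin_succ ha 0
  rw [zero_add, phin_zero, revc_one] at h
  rw [phin_zero, revc_one]
  linear_combination -h

lemma T_one_mul_chi_two_mul_add_one (m : ℕ) :
    T 1 * chi a (2 * m + 1) =
      (-(rhoh a (2 * m + 1) : ℂ) * a (2 * m + 2)) • chi a (2 * m) +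
        (-conj (a (2 * m + 1)) * a (2 * m + 2)) • chi a (2 * m + 1) +
        (-(rho a (2 * m + 2) : ℂ) * a (2 * m + 3)) • chi a (2 * m + 2) +
        ((rho a (2 * m + 2) : ℂ) * (rho a (2 * m + 3) : ℂ)) • chi a (2 * m + 3) := by
  rw [chi_eq_T_mul a (j := 2 * m) (i := 1) (k := m + 1) (by omega),
    chi_eq_T_mul a (j := 2 * m + 1) (i := 1) (k := m + 1) (by omega),
    chi_eq_T_mul a (j := 2 * m + 2) (i := 0) (k := m + 1) (by omega),
    chi_eq_T_mul a (j := 2 * m + 3) (i := 0) (k := m + 1) (by omega)]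
  simp only [T_one_mul_T_mul_toLaurent, smul_T_mul_toLaurent, ← mul_add, ← map_add]
  congr 2
  simp only [Nat.even_add, even_two_mul, Nat.not_even_one, even_two, (by decide : ¬Even 3),
    iff_false, not_true_eq_false, ↓reduceIte, pow_one, pow_zero, one_mul]
  linear_combination X_sq_mul_phin_succ ha (2 * m)

lemma T_one_mul_chi_two_mul_add_two (m : ℕ) :
    T 1 * chi a (2 * m + 2) =
      ((rhoh a (2 * m + 1) : ℂ) * (rhoh a (2 * m + 2) : ℂ)) • chi a (2 * m) +
        (conj (a (2 * m + 1)) * (rhoh a (2 * m + 2) : ℂ)) • chi a (2 * m + 1) +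
        (-conj (a (2 * m + 2)) * a (2 * m + 3)) • chi a (2 * m + 2) +
        (conj (a (2 * m + 2)) * (rho a (2 * m + 3) : ℂ)) • chi a (2 * m + 3) := by
  rw [chi_eq_T_mul a (j := 2 * m) (i := 1) (k := m + 1) (by omega),
    chi_eq_T_mul a (j := 2 * m + 1) (i := 1) (k := m + 1) (by omega),
    chi_eq_T_mul a (j := 2 * m + 2) (i := 0) (k := m + 1) (by omega),
    chi_eq_T_mul a (j := 2 * m + 3) (i := 0) (k := m + 1) (by omega)]
  simp only [T_one_mul_T_mul_toLaurent, smul_T_mul_toLaurent, ← mul_add, ← map_add]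
  congr 2
  simp only [Nat.even_add, even_two_mul, Nat.not_even_one, even_two, (by decide : ¬Even 3),
    iff_false, not_true_eq_false, ↓reduceIte, pow_one, pow_zero, one_mul]
  linear_combination X_mul_revc_phin_add_two ha (2 * m)

end Schur

/-- Proposition 2.5: the five-term recurrence relation for the standard
right orthonormal Laurent polynomials χ_n. -/
theorem chi_five_term_recurrence (a : ℕ → ℂ) (ha : ∀ n, 1 ≤ n → ‖a n‖ ≠ 1) :
    T 1 * chi a 0 = (-a 1) • chi a 0 + (rho a 1 : ℂ) • chi a 1 ∧
    ∀ n : ℕ, 1 ≤ n →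
      T 1 * chi a (2 * n - 1) =
          (-(rhoh a (2 * n - 1) : ℂ) * a (2 * n)) • chi a (2 * n - 2) +
            (-conj (a (2 * n - 1)) * a (2 * n)) • chi a (2 * n - 1) +
            (-(rho a (2 * n) : ℂ) * a (2 * n + 1)) • chi a (2 * n) +
            ((rho a (2 * n) : ℂ) * (rho a (2 * n + 1) : ℂ)) • chi a (2 * n + 1) ∧
      T 1 * chi a (2 * n) =
          ((rhoh a (2 * n - 1) : ℂ) * (rhoh a (2 * n) : ℂ)) • chi a (2 * n - 2) +
            (conj (a (2 * n - 1)) * (rhoh a (2 * n) : ℂ)) • chi a (2 * n - 1) +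
            (-conj (a (2 * n)) * a (2 * n + 1)) • chi a (2 * n) +
            (conj (a (2 * n)) * (rho a (2 * n + 1) : ℂ)) • chi a (2 * n + 1) := by
  refine ⟨T_one_mul_chi_zero ha, fun n hn => ?_⟩
  obtain ⟨m, rfl⟩ : ∃ m, n = m + 1 := ⟨n - 1, by omega⟩
  rw [show 2 * (m + 1) - 1 = 2 * m + 1 by omega, show 2 * (m + 1) - 2 = 2 * m by omega,
    show 2 * (m + 1) = 2 * m + 2 by ring]
  exact ⟨T_one_mul_chi_two_mul_add_one ha m, T_one_mul_chi_two_mul_add_two ha m⟩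
end
end
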